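/- arXiv:2406.03288 — 4 statements merged into one kernel-verified Lean document; each statement's English description precedes it below -/
import Mathlib

section
/- Trajectory balance implies sampling proportionally to the reward. If the trajectory balance condition holds for (pF, pB, R) with constant Z > 0, then Z = Σ_{x∈𝒳} R(x) and the marginal of pF over terminal states satisfies p_T(x) = R(x)/Σ_{y∈𝒳} R(y) for all x ∈ 𝒳. -/
/-!
Summing the balance equation `Z · pF τ = R(term τ) · pB τ` over the trajectories ending in `x`
gives `Z · p_T(x) = R(x)`, because the backward policy is normalised on each fibre. Summing this
over `x` and using that `pF` is normalised gives `Z = ∑ R`, and dividing yields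
`p_T(x) = R(x) / ∑ R`.
-/

open Finset

section TerminalMarginal

variable {T X M : Type*} [Fintype T] [DecidableEq X]

/-- The marginal `p_T` of a weighting of trajectories over their terminal states. -/
def terminalMarginal [AddCommMonoid M] (term : T → X) (p : T → M) (x : X) : M :=
  ∑ τ ∈ univ.filter (fun τ => term τ = x), p τ

theorem sum_terminalMarginal [Fintype X] [AddCommMonoid M] (term : T → X) (p : T → M) :
    ∑ x, terminalMarginal term p x = ∑ τ, p τ :=
  sum_fiberwise univ term p

theorem mul_terminalMarginal_of_balance [CommSemiring M] (term : T → X) {pF pB : T → M}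
    {R : X → M} {Z : M} (hTB : ∀ τ, Z * pF τ = R (term τ) * pB τ) (x : X) :
    Z * terminalMarginal term pF x = R x * terminalMarginal term pB x := by
  rw [terminalMarginal, terminalMarginal, mul_sum, mul_sum]
  refine sum_congr rfl fun τ hτ => ?_
  rw [hTB, (mem_filter.mp hτ).2]

end TerminalMarginal

theorem trajectory_balance_samples_proportionally_general
    {T X : Type} [Fintype T] [Fintype X] [DecidableEq X]
    (term : T → X)
    (pF pB : T → ℝ) (R : X → ℝ)
    (hpF_sum : ∑ τ, pF τ = 1)
    (hpB_sum : ∀ x, ∑ τ ∈ univ.filter (fun τ => term τ = x), pB τ = 1)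
    (Z : ℝ) (hZ : 0 < Z)
    (hTB : ∀ τ, Z * pF τ = R (term τ) * pB τ) :
    Z = (∑ x, R x) ∧
      ∀ x, ∑ τ ∈ univ.filter (fun τ => term τ = x), pF τ = R x / ∑ y, R y := by
  have hfiber (x : X) : Z * terminalMarginal term pF x = R x := by
    rw [mul_terminalMarginal_of_balance term hTB, terminalMarginal, hpB_sum, mul_one]
  have hZ_eq : Z = ∑ x, R x := by
    calc Z = Z * ∑ τ, pF τ := by rw [hpF_sum, mul_one]
      _ = ∑ x, Z * terminalMarginal term pF x := by rw [← sum_terminalMarginal term, mul_sum]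
      _ = ∑ x, R x := sum_congr rfl fun x _ => hfiber x
  refine ⟨hZ_eq, fun x => ?_⟩
  rw [← hZ_eq, eq_div_iff hZ.ne', mul_comm]
  exact hfiber x

/-- Trajectory balance implies sampling proportionally to the reward. -/
theorem trajectory_balance_samples_proportionally
    {T X : Type} [Fintype T] [Fintype X] [Nonempty T] [Nonempty X] [DecidableEq X]
    (term : T → X) (hsurj : Function.Surjective term)
    (pF pB : T → ℝ) (R : X → ℝ)
    (hpF_pos : ∀ τ, 0 < pF τ) (hpF_sum : ∑ τ, pF τ = 1)
    (hpB_pos : ∀ τ, 0 < pB τ)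
    (hpB_sum : ∀ x, ∑ τ ∈ univ.filter (fun τ => term τ = x), pB τ = 1)
    (hR : ∀ x, 0 < R x)
    (Z : ℝ) (hZ : 0 < Z)
    (hTB : ∀ τ, Z * pF τ = R (term τ) * pB τ) :
    Z = (∑ x, R x) ∧
      ∀ x, ∑ τ ∈ univ.filter (fun τ => term τ = x), pF τ = R x / ∑ y, R y :=
  trajectory_balance_samples_proportionally_general term pF pB R hpF_sum hpB_sum Z hZ hTB
end

section
/- Aggregating balance loss (Corollary, sufficiency direction). Let ν : 𝒯 × 𝒯 → ℝ satisfy ν(τ,τ') > 0 for all τ, τ' and Σ_{(τ,τ')} ν(τ,τ') = 1. Define L_AB(τ,τ') = (log(pF(τ)·pB(τ')/(pB(τ)·pF(τ'))) − Σ_{n=1}^N log(pFₙ(τ)·pBₙ(τ')/(pBₙ(τ)·pFₙ(τ'))))². Suppose the trajectory balance condition holds for (pFₙ, pBₙ, Rₙ) for each n = 1, …, N, and Σ_{(τ,τ')} ν(τ,τ')·L_AB(τ,τ') = 0. Then the marginal of pF over terminal states satisfies p_T(x) = (∏_{n=1}^N Rₙ(x))/(Σ_{y∈𝒳} ∏_{n=1}^N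 Rₙ(y)) for all x ∈ 𝒳. -/
/-!
Zero loss under a positive weighting forces every squared residual to vanish, so
`log (pF τ / pB τ) - ∑ n, log (pFₙ τ / pBₙ τ)` takes the same value on all trajectories.
Trajectory balance of `(pFₙ, pBₙ, Rₙ)` says exactly that
`log (pFₙ τ / pBₙ τ) - log (Rₙ (term τ))` is constant, hence `(pF, pB)` is trajectory balanced
for the product reward `∏ n, Rₙ`. Summing `Z * pF τ = R (term τ) * pB τ` over a fibre of `term`
gives `Z * p_T = R`, and summing once more identifies `Z` with `∑ y, R y`.
-/

open Finset

section Loss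

variable {ι κ R : Type*} [Fintype ι] [Fintype κ]
  [CommSemiring R] [PartialOrder R] [IsOrderedRing R] [NoZeroDivisors R]

theorem eq_zero_of_sum_sum_mul_eq_zero {w f : ι → κ → R} (hw : ∀ i j, 0 < w i j)
    (hf : ∀ i j, 0 ≤ f i j) (h : ∑ i, ∑ j, w i j * f i j = 0) (i : ι) (j : κ) :
    f i j = 0 := by
  have hterm : ∀ i j, 0 ≤ w i j * f i j := fun i j => mul_nonneg (hw i j).le (hf i j)
  have hrow := (sum_eq_zero_iff_of_nonneg fun i _ => sum_nonneg fun j _ => hterm i j).mp h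
    i (mem_univ i)
  have hij := (sum_eq_zero_iff_of_nonneg fun j _ => hterm i j).mp hrow j (mem_univ j)
  exact (mul_eq_zero.mp hij).resolve_left (hw i j).ne'

end Loss

theorem Real.log_mul_div_mul {a b c d : ℝ} (ha : a ≠ 0) (hb : b ≠ 0) (hc : c ≠ 0)
    (hd : d ≠ 0) :
    Real.log (a * d / (b * c)) = Real.log (a / b) - Real.log (c / d) := by
  rw [← Real.log_div (div_ne_zero ha hb) (div_ne_zero hc hd)]
  congr 1
  field_simp

section TrajectoryBalance

variable {T X : Type*} (term : T → X)

def IsTrajectoryBalanced (pF pB : T → ℝ) (R : X → ℝ) : Prop :=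
  ∃ Z > (0 : ℝ), ∀ τ, Z * pF τ = R (term τ) * pB τ

variable {term}

theorem isTrajectoryBalanced_iff_exists_log_div_eq {pF pB : T → ℝ} {R : X → ℝ}
    (hpF : ∀ τ, 0 < pF τ) (hpB : ∀ τ, 0 < pB τ) (hR : ∀ x, 0 < R x) :
    IsTrajectoryBalanced term pF pB R ↔
      ∃ k, ∀ τ, Real.log (pF τ / pB τ) = Real.log (R (term τ)) + k := by
  constructor
  · rintro ⟨Z, hZ, hbal⟩
    refine ⟨-Real.log Z, fun τ => ?_⟩
    have hratio : pF τ / pB τ = R (term τ) / Z := by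
      rw [div_eq_div_iff (hpB τ).ne' hZ.ne']
      linarith [hbal τ]
    rw [hratio, Real.log_div (hR _).ne' hZ.ne', sub_eq_add_neg]
  · rintro ⟨k, hk⟩
    refine ⟨Real.exp (-k), Real.exp_pos _, fun τ => ?_⟩
    have hratio : pF τ / pB τ = R (term τ) * Real.exp k := by
      rw [← Real.exp_log (div_pos (hpF τ) (hpB τ)), hk, Real.exp_add, Real.exp_log (hR _)]
    rw [div_eq_iff (hpB τ).ne'] at hratio
    rw [hratio, Real.exp_neg]
    field_simp

theorem IsTrajectoryBalanced.prod {ι : Type*} [Fintype ι] {pF pB : T → ℝ}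
    {pFs pBs : ι → T → ℝ} {Rs : ι → X → ℝ} (hpF : ∀ τ, 0 < pF τ) (hpB : ∀ τ, 0 < pB τ)
    (hpFs : ∀ i τ, 0 < pFs i τ) (hpBs : ∀ i τ, 0 < pBs i τ) (hRs : ∀ i x, 0 < Rs i x)
    (hbal : ∀ i, IsTrajectoryBalanced term (pFs i) (pBs i) (Rs i))
    (hgap : ∃ c, ∀ τ, Real.log (pF τ / pB τ) = ∑ i, Real.log (pFs i τ / pBs i τ) + c) :
    IsTrajectoryBalanced term pF pB (fun x => ∏ i, Rs i x) := by
  choose k hk using fun i =>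
    (isTrajectoryBalanced_iff_exists_log_div_eq (hpFs i) (hpBs i) (hRs i)).mp (hbal i)
  obtain ⟨c, hc⟩ := hgap
  refine (isTrajectoryBalanced_iff_exists_log_div_eq hpF hpB
    fun x => prod_pos fun i _ => hRs i x).mpr ⟨∑ i, k i + c, fun τ => ?_⟩
  rw [hc τ, Real.log_prod fun i _ => (hRs i _).ne']
  simp only [hk, sum_add_distrib]
  ring

theorem IsTrajectoryBalanced.marginal_eq [Fintype T] [Fintype X] [DecidableEq X]
    {pF pB : T → ℝ} {R : X → ℝ} (hbal : IsTrajectoryBalanced term pF pB R)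
    (hpF_sum : ∑ τ, pF τ = 1)
    (hpB_sum : ∀ x, ∑ τ ∈ univ.filter (fun τ => term τ = x), pB τ = 1)
    (x : X) : ∑ τ ∈ univ.filter (fun τ => term τ = x), pF τ = R x / ∑ y, R y := by
  obtain ⟨Z, hZ, hbal⟩ := hbal
  have hfibre : ∀ x, Z * ∑ τ ∈ univ.filter (fun τ => term τ = x), pF τ = R x := by
    intro x
    rw [mul_sum, ← mul_one (R x), ← hpB_sum x, mul_sum]
    refine sum_congr rfl fun τ hτ => ?_
    rw [hbal, (mem_filter.mp hτ).2]
  have hZ_eq : Z = ∑ y, R y := by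
    calc Z = Z * ∑ τ, pF τ := by rw [hpF_sum, mul_one]
      _ = ∑ y, R y := by
        rw [← sum_fiberwise univ term pF, mul_sum]
        exact sum_congr rfl fun y _ => hfibre y
  rw [← hZ_eq, eq_div_iff hZ.ne', mul_comm, hfibre]

end TrajectoryBalance

theorem aggregating_balance_loss_sufficiency_general
    {T X : Type} [Fintype T] [Fintype X] [Nonempty T] [DecidableEq X]
    (term : T → X)
    (N : ℕ) (pFn pBn : Fin N → T → ℝ) (Rn : Fin N → X → ℝ)
    (pF pB : T → ℝ)
    (hpFn_pos : ∀ n τ, 0 < pFn n τ)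
    (hpBn_pos : ∀ n τ, 0 < pBn n τ)
    (hRn_pos : ∀ n x, 0 < Rn n x)
    (hpF_pos : ∀ τ, 0 < pF τ) (hpF_sum : ∑ τ, pF τ = 1)
    (hpB_pos : ∀ τ, 0 < pB τ)
    (hpB_sum : ∀ x, ∑ τ ∈ univ.filter (fun τ => term τ = x), pB τ = 1)
    (ν : T → T → ℝ) (hν_pos : ∀ τ τ', 0 < ν τ τ')
    (L : T → T → ℝ)
    (hL : ∀ τ τ', L τ τ' =
      (Real.log (pF τ * pB τ' / (pB τ * pF τ'))
        - ∑ n, Real.log (pFn n τ * pBn n τ' / (pBn n τ * pFn n τ'))) ^ 2)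
    (hTBn : ∀ n, ∃ Z > (0 : ℝ), ∀ τ, Z * pFn n τ = Rn n (term τ) * pBn n τ)
    (hzero : ∑ τ, ∑ τ', ν τ τ' * L τ τ' = 0) :
    ∀ x, ∑ τ ∈ univ.filter (fun τ => term τ = x), pF τ =
      (∏ n, Rn n x) / ∑ y, ∏ n, Rn n y := by
  have hL_zero :=
    eq_zero_of_sum_sum_mul_eq_zero hν_pos (fun τ τ' => hL τ τ' ▸ sq_nonneg _) hzero
  have hgap : ∀ τ τ', Real.log (pF τ / pB τ) - ∑ n, Real.log (pFn n τ / pBn n τ) =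
      Real.log (pF τ' / pB τ') - ∑ n, Real.log (pFn n τ' / pBn n τ') := by
    intro τ τ'
    have h := hL_zero τ τ'
    rw [hL, pow_eq_zero_iff two_ne_zero, sub_eq_zero,
      Real.log_mul_div_mul (hpF_pos τ).ne' (hpB_pos τ).ne' (hpF_pos τ').ne' (hpB_pos τ').ne',
      sum_congr rfl fun n _ => Real.log_mul_div_mul (hpFn_pos n τ).ne' (hpBn_pos n τ).ne'
        (hpFn_pos n τ').ne' (hpBn_pos n τ').ne', sum_sub_distrib] at h
    linarith
  obtain ⟨τ₀⟩ := ‹Nonempty T›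
  have hbal : IsTrajectoryBalanced term pF pB (fun x => ∏ n, Rn n x) :=
    IsTrajectoryBalanced.prod hpF_pos hpB_pos hpFn_pos hpBn_pos hRn_pos hTBn
      ⟨_, fun τ => eq_add_of_sub_eq' (hgap τ τ₀)⟩
  exact hbal.marginal_eq hpF_sum hpB_sum

/-- Aggregating balance loss (Corollary, sufficiency direction). -/
theorem aggregating_balance_loss_sufficiency
    {T X : Type} [Fintype T] [Fintype X] [Nonempty T] [Nonempty X] [DecidableEq X]
    (term : T → X) (hsurj : Function.Surjective term)
    (N : ℕ) (pFn pBn : Fin N → T → ℝ) (Rn : Fin N → X → ℝ)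
    (pF pB : T → ℝ)
    (hpFn_pos : ∀ n τ, 0 < pFn n τ) (hpFn_sum : ∀ n, ∑ τ, pFn n τ = 1)
    (hpBn_pos : ∀ n τ, 0 < pBn n τ)
    (hpBn_sum : ∀ n x, ∑ τ ∈ univ.filter (fun τ => term τ = x), pBn n τ = 1)
    (hRn_pos : ∀ n x, 0 < Rn n x)
    (hpF_pos : ∀ τ, 0 < pF τ) (hpF_sum : ∑ τ, pF τ = 1)
    (hpB_pos : ∀ τ, 0 < pB τ)
    (hpB_sum : ∀ x, ∑ τ ∈ univ.filter (fun τ => term τ = x), pB τ = 1)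
    (ν : T → T → ℝ) (hν_pos : ∀ τ τ', 0 < ν τ τ')
    (hν_sum : ∑ τ, ∑ τ', ν τ τ' = 1)
    (L : T → T → ℝ)
    (hL : ∀ τ τ', L τ τ' =
      (Real.log (pF τ * pB τ' / (pB τ * pF τ'))
        - ∑ n, Real.log (pFn n τ * pBn n τ' / (pBn n τ * pFn n τ'))) ^ 2)
    (hTBn : ∀ n, ∃ Z > (0 : ℝ), ∀ τ, Z * pFn n τ = Rn n (term τ) * pBn n τ)
    (hzero : ∑ τ, ∑ τ', ν τ τ' * L τ τ' = 0) :
    ∀ x, ∑ τ ∈ univ.filter (fun τ => term τ = x), pF τ =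
      (∏ n, Rn n x) / ∑ y, ∏ n, Rn n y :=
  aggregating_balance_loss_sufficiency_general term N pFn pBn Rn pF pB hpFn_pos hpBn_pos hRn_pos
    hpF_pos hpF_sum hpB_pos hpB_sum ν hν_pos L hL hTBn hzero
end

section
/- Sandwich bound on the aggregated unnormalized marginal (intermediate step of Theorem 2). For n = 1, …, N let πₙ(x) = Rₙ(x)/Σ_{y} Rₙ(y), and suppose there are αₙ ∈ (0,1) and βₙ > 0 with (1 − αₙ)·pBₙ(τ)·πₙ(term(τ)) ≤ pFₙ(τ) ≤ (1 + βₙ)·pBₙ(τ)·πₙ(term(τ)) for all τ ∈ 𝒯. Let pB be any backward policy, u(x) = ∏_{n=1}^N πₙ(x), and v(x) = Σ_{τ : term(τ)=x} pB(τ)·∏_{n=1}^N pFₙ(τ)/pBₙ(τ). Then for every x ∈ 𝒳, u(x)·∏_{n=1}^N (1 − αₙ) ≤ v(x) ≤ u(x)·∏_{n=1}^N (1 + βₙ). -/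
/-!
Dividing the two-sided bound on `pFₙ` by `pBₙ(τ) > 0` sandwiches each ratio `pFₙ(τ) / pBₙ(τ)`
between `(1 - αₙ) πₙ(x)` and `(1 + βₙ) πₙ(x)` on the fibre of `x`; these bounds are nonnegative,
so they multiply over `n`, and `v(x)` is an average of the products with weights `pB` on the fibre.
-/

open Finset

section WeightedAverage

variable {ι : Type*} {s : Finset ι} {w f : ι → ℝ} {c : ℝ}

theorem Finset.le_sum_mul_of_sum_eq_one (hw : ∀ i ∈ s, 0 ≤ w i) (hsum : ∑ i ∈ s, w i = 1)
    (hf : ∀ i ∈ s, c ≤ f i) : c ≤ ∑ i ∈ s, w i * f i :=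
  calc c = ∑ i ∈ s, w i * c := by rw [← sum_mul, hsum, one_mul]
    _ ≤ ∑ i ∈ s, w i * f i := sum_le_sum fun i hi => mul_le_mul_of_nonneg_left (hf i hi) (hw i hi)

theorem Finset.sum_mul_le_of_sum_eq_one (hw : ∀ i ∈ s, 0 ≤ w i) (hsum : ∑ i ∈ s, w i = 1)
    (hf : ∀ i ∈ s, f i ≤ c) : ∑ i ∈ s, w i * f i ≤ c :=
  calc ∑ i ∈ s, w i * f i ≤ ∑ i ∈ s, w i * c :=
        sum_le_sum fun i hi => mul_le_mul_of_nonneg_left (hf i hi) (hw i hi)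
    _ = c := by rw [← sum_mul, hsum, one_mul]

end WeightedAverage

theorem mul_le_div_of_mul_mul_le {a b p q : ℝ} (hq : 0 < q) (h : a * (q * b) ≤ p) :
    a * b ≤ p / q := by
  rw [le_div_iff₀ hq]
  linarith [mul_assoc a b q, mul_comm q b]

theorem div_le_mul_of_le_mul_mul {a b p q : ℝ} (hq : 0 < q) (h : p ≤ a * (q * b)) :
    p / q ≤ a * b := by
  rw [div_le_iff₀ hq]
  linarith [mul_assoc a b q, mul_comm q b]

theorem sandwich_bound_aggregated_marginal_general
    {T X : Type} [Fintype T] [Fintype X] [DecidableEq X]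
    (term : T → X)
    (N : ℕ) (pFn pBn : Fin N → T → ℝ) (Rn : Fin N → X → ℝ)
    (hpFn_pos : ∀ n τ, 0 < pFn n τ)
    (hpBn_pos : ∀ n τ, 0 < pBn n τ)
    (hRn_pos : ∀ n x, 0 < Rn n x)
    (pB : T → ℝ) (hpB_pos : ∀ τ, 0 < pB τ)
    (hpB_sum : ∀ x, ∑ τ ∈ univ.filter (fun τ => term τ = x), pB τ = 1)
    (α β : Fin N → ℝ) (hα : ∀ n, α n ∈ Set.Ioo (0 : ℝ) 1)
    (piL : Fin N → X → ℝ) (hpiL : ∀ n x, piL n x = Rn n x / ∑ y, Rn n y)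
    (hlower : ∀ n τ, (1 - α n) * (pBn n τ * piL n (term τ)) ≤ pFn n τ)
    (hupper : ∀ n τ, pFn n τ ≤ (1 + β n) * (pBn n τ * piL n (term τ)))
    (u : X → ℝ) (hu : ∀ x, u x = ∏ n, piL n x)
    (v : X → ℝ)
    (hv : ∀ x, v x = ∑ τ ∈ univ.filter (fun τ => term τ = x),
      pB τ * ∏ n, pFn n τ / pBn n τ) :
    ∀ x, u x * (∏ n, (1 - α n)) ≤ v x ∧ v x ≤ u x * ∏ n, (1 + β n) := by
  intro x
  have hpiL_pos : ∀ n, 0 < piL n x := fun n => by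
    rw [hpiL]
    exact div_pos (hRn_pos n x) (sum_pos (fun y _ => hRn_pos n y) ⟨x, mem_univ x⟩)
  have hweights : ∀ τ ∈ univ.filter (fun τ => term τ = x), 0 ≤ pB τ := fun τ _ => (hpB_pos τ).le
  rw [hv, hu]
  constructor
  · refine le_sum_mul_of_sum_eq_one hweights (hpB_sum x) fun τ hτ => ?_
    obtain rfl := (mem_filter.mp hτ).2
    rw [mul_comm, ← prod_mul_distrib]
    exact prod_le_prod (fun n _ => mul_nonneg (sub_nonneg.mpr (hα n).2.le) (hpiL_pos n).le)
      fun n _ => mul_le_div_of_mul_mul_le (hpBn_pos n τ) (hlower n τ)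
  · refine sum_mul_le_of_sum_eq_one hweights (hpB_sum x) fun τ hτ => ?_
    obtain rfl := (mem_filter.mp hτ).2
    rw [mul_comm, ← prod_mul_distrib]
    exact prod_le_prod (fun n _ => div_nonneg (hpFn_pos n τ).le (hpBn_pos n τ).le)
      fun n _ => div_le_mul_of_le_mul_mul (hpBn_pos n τ) (hupper n τ)

/-- Sandwich bound on the aggregated unnormalized marginal
(intermediate step of Theorem 2). -/
theorem sandwich_bound_aggregated_marginal
    {T X : Type} [Fintype T] [Fintype X] [Nonempty T] [Nonempty X] [DecidableEq X]
    (term : T → X) (hsurj : Function.Surjective term)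
    (N : ℕ) (pFn pBn : Fin N → T → ℝ) (Rn : Fin N → X → ℝ)
    (hpFn_pos : ∀ n τ, 0 < pFn n τ) (hpFn_sum : ∀ n, ∑ τ, pFn n τ = 1)
    (hpBn_pos : ∀ n τ, 0 < pBn n τ)
    (hpBn_sum : ∀ n x, ∑ τ ∈ univ.filter (fun τ => term τ = x), pBn n τ = 1)
    (hRn_pos : ∀ n x, 0 < Rn n x)
    (pB : T → ℝ) (hpB_pos : ∀ τ, 0 < pB τ)
    (hpB_sum : ∀ x, ∑ τ ∈ univ.filter (fun τ => term τ = x), pB τ = 1)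
    (α β : Fin N → ℝ) (hα : ∀ n, α n ∈ Set.Ioo (0 : ℝ) 1) (hβ : ∀ n, 0 < β n)
    (piL : Fin N → X → ℝ) (hpiL : ∀ n x, piL n x = Rn n x / ∑ y, Rn n y)
    (hlower : ∀ n τ, (1 - α n) * (pBn n τ * piL n (term τ)) ≤ pFn n τ)
    (hupper : ∀ n τ, pFn n τ ≤ (1 + β n) * (pBn n τ * piL n (term τ)))
    (u : X → ℝ) (hu : ∀ x, u x = ∏ n, piL n x)
    (v : X → ℝ)
    (hv : ∀ x, v x = ∑ τ ∈ univ.filter (fun τ => term τ = x),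
      pB τ * ∏ n, pFn n τ / pBn n τ) :
    ∀ x, u x * (∏ n, (1 - α n)) ≤ v x ∧ v x ≤ u x * ∏ n, (1 + β n) :=
  sandwich_bound_aggregated_marginal_general term N pFn pBn Rn hpFn_pos hpBn_pos hRn_pos pB hpB_pos
    hpB_sum α β hα piL hpiL hlower hupper u hu v hv
end

section
/- Weighted influence of local failures (Theorem 2'). Let ω₁, …, ω_N > 0 be real weights. For n = 1, …, N let πₙ(x) = Rₙ(x)/Σ_{y} Rₙ(y), and suppose there are αₙ ∈ (0,1) and βₙ > 0 with (1 − αₙ)·pBₙ(τ)·πₙ(term(τ)) ≤ pFₙ(τ) ≤ (1 + βₙ)·pBₙ(τ)·πₙ(term(τ)) for all τ ∈ 𝒯. Let pB be any backward policy. Define u(x) = ∏_{n=1}^N πₙ(x)^{ωₙ} and π(x) = u(x)/Σ_y u(y), and define v(x) = Σ_{τ : term(τ)=x} pB(τ)·∏_{n=1}^N (pFₙ(τ)/pBₙ(τ))^{ωₙ} and π̂(x) = v(x)/Σ_y v(y). Then the Jeffrey divergence satisfies D_J(π, π̂) := Σ_{x} π(x)·log(π(x)/π̂(x)) + Σ_{x}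 π̂(x)·log(π̂(x)/π(x)) ≤ Σ_{n=1}^N ωₙ·log((1 + βₙ)/(1 − αₙ)). -/
/-!
Raising `(1 - αₙ) πₙ(term τ) ≤ pFₙ(τ) / pBₙ(τ) ≤ (1 + βₙ) πₙ(term τ)` to the powers `ωₙ` and
multiplying puts the weight of every trajectory between `a · u(term τ)` and `b · u(term τ)`, where
`a = ∏ (1 - αₙ)^ωₙ` and `b = ∏ (1 + βₙ)^ωₙ`; averaging over `pB` gives `a · u ≤ v ≤ b · u`.
Then `π / π̂ ≤ a⁻¹ (Σ v / Σ u)` and `π̂ / π ≤ b (Σ u / Σ v)` pointwise, so the two halves of the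
Jeffrey divergence add up to at most `log (b / a)`: the normalising constants cancel.
-/

open Finset Real

section WeightedAverage

variable {ι : Type*} {s : Finset ι} {w f : ι → ℝ} {c : ℝ}

lemma Finset.sum_mul_le_of_forall_le (hw : ∀ i ∈ s, 0 ≤ w i) (hw₁ : ∑ i ∈ s, w i = 1)
    (hf : ∀ i ∈ s, f i ≤ c) : ∑ i ∈ s, w i * f i ≤ c :=
  calc ∑ i ∈ s, w i * f i ≤ ∑ i ∈ s, w i * c :=
        sum_le_sum fun i hi => mul_le_mul_of_nonneg_left (hf i hi) (hw i hi)
    _ = c := by rw [← sum_mul, hw₁, one_mul]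

lemma Finset.le_sum_mul_of_forall_le (hw : ∀ i ∈ s, 0 ≤ w i) (hw₁ : ∑ i ∈ s, w i = 1)
    (hf : ∀ i ∈ s, c ≤ f i) : c ≤ ∑ i ∈ s, w i * f i :=
  calc c = ∑ i ∈ s, w i * c := by rw [← sum_mul, hw₁, one_mul]
    _ ≤ ∑ i ∈ s, w i * f i :=
        sum_le_sum fun i hi => mul_le_mul_of_nonneg_left (hf i hi) (hw i hi)

end WeightedAverage

section WeightedProducts

variable {ι : Type*} (s : Finset ι) {c f g w : ι → ℝ}

lemma Finset.prod_mul_rpow (hc : ∀ i ∈ s, 0 ≤ c i) (hf : ∀ i ∈ s, 0 ≤ f i) :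
    ∏ i ∈ s, (c i * f i) ^ w i = (∏ i ∈ s, c i ^ w i) * ∏ i ∈ s, f i ^ w i := by
  rw [← prod_mul_distrib]
  exact prod_congr rfl fun i hi => mul_rpow (hc i hi) (hf i hi)

lemma Finset.prod_rpow_le_prod_rpow (hf : ∀ i ∈ s, 0 ≤ f i) (hfg : ∀ i ∈ s, f i ≤ g i)
    (hw : ∀ i ∈ s, 0 ≤ w i) : ∏ i ∈ s, f i ^ w i ≤ ∏ i ∈ s, g i ^ w i :=
  prod_le_prod (fun i hi => rpow_nonneg (hf i hi) _)
    fun i hi => rpow_le_rpow (hf i hi) (hfg i hi) (hw i hi)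

lemma Finset.mul_prod_rpow_le_prod_rpow (hc : ∀ i ∈ s, 0 ≤ c i) (hf : ∀ i ∈ s, 0 ≤ f i)
    (hw : ∀ i ∈ s, 0 ≤ w i) (h : ∀ i ∈ s, c i * f i ≤ g i) :
    (∏ i ∈ s, c i ^ w i) * ∏ i ∈ s, f i ^ w i ≤ ∏ i ∈ s, g i ^ w i := by
  rw [← prod_mul_rpow s hc hf]
  exact prod_rpow_le_prod_rpow s (fun i hi => mul_nonneg (hc i hi) (hf i hi)) h hw

lemma Finset.prod_rpow_le_mul_prod_rpow (hc : ∀ i ∈ s, 0 ≤ c i) (hf : ∀ i ∈ s, 0 ≤ f i)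
    (hg : ∀ i ∈ s, 0 ≤ g i) (hw : ∀ i ∈ s, 0 ≤ w i) (h : ∀ i ∈ s, g i ≤ c i * f i) :
    ∏ i ∈ s, g i ^ w i ≤ (∏ i ∈ s, c i ^ w i) * ∏ i ∈ s, f i ^ w i := by
  rw [← prod_mul_rpow s hc hf]
  exact prod_rpow_le_prod_rpow s hg h hw

lemma Finset.log_prod_rpow_div_prod_rpow (hc : ∀ i ∈ s, 0 < c i) (hg : ∀ i ∈ s, 0 < g i) :
    log ((∏ i ∈ s, g i ^ w i) / ∏ i ∈ s, c i ^ w i) = ∑ i ∈ s, w i * log (g i / c i) := by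
  rw [← prod_div_distrib, log_prod fun i hi =>
    (div_pos (rpow_pos_of_pos (hg i hi) _) (rpow_pos_of_pos (hc i hi) _)).ne']
  refine sum_congr rfl fun i hi => ?_
  rw [← div_rpow (hg i hi).le (hc i hi).le, log_rpow (div_pos (hg i hi) (hc i hi))]

end WeightedProducts

section JeffreyDivergence

variable {X : Type*} [Fintype X] {u v : X → ℝ}

noncomputable def normalizeSum (u : X → ℝ) (x : X) : ℝ := u x / ∑ y, u y

noncomputable def jeffreyDiv (p q : X → ℝ) : ℝ :=
  ∑ x, p x * log (p x / q x) + ∑ x, q x * log (q x / p x)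

lemma sum_normalizeSum (hu : ∑ y, u y ≠ 0) : ∑ x, normalizeSum u x = 1 := by
  simp only [normalizeSum, ← sum_div, div_self hu]

lemma sum_pos_of_forall_pos [Nonempty X] (hu : ∀ x, 0 < u x) : 0 < ∑ y, u y :=
  sum_pos (fun y _ => hu y) univ_nonempty

lemma normalizeSum_pos [Nonempty X] (hu : ∀ x, 0 < u x) (x : X) : 0 < normalizeSum u x :=
  div_pos (hu x) (sum_pos_of_forall_pos hu)

lemma normalizeSum_div_normalizeSum (x : X) :
    normalizeSum u x / normalizeSum v x = u x / v x * ((∑ y, v y) / ∑ y, u y) := by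
  rw [normalizeSum, normalizeSum, div_div_div_eq, div_mul_div_comm, mul_comm (∑ y, u y)]

lemma sum_normalizeSum_mul_log_div_le [Nonempty X] (hu : ∀ x, 0 < u x) (hv : ∀ x, 0 < v x)
    {c : ℝ} (h : ∀ x, u x ≤ c * v x) :
    ∑ x, normalizeSum u x * log (normalizeSum u x / normalizeSum v x) ≤
      log (c * ((∑ y, v y) / ∑ y, u y)) := by
  have hSu := sum_pos_of_forall_pos hu
  have hSv := sum_pos_of_forall_pos hv
  refine sum_mul_le_of_forall_le (fun x _ => (normalizeSum_pos hu x).le) (sum_normalizeSum hSu.ne')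
    fun x _ => ?_
  rw [normalizeSum_div_normalizeSum]
  have hratio : u x / v x ≤ c := (div_le_iff₀ (hv x)).2 (h x)
  exact log_le_log (mul_pos (div_pos (hu x) (hv x)) (div_pos hSv hSu))
    (mul_le_mul_of_nonneg_right hratio (div_pos hSv hSu).le)

theorem jeffreyDiv_normalizeSum_le [Nonempty X] (hu : ∀ x, 0 < u x) (hv : ∀ x, 0 < v x)
    {a b : ℝ} (ha : 0 < a) (hlo : ∀ x, a * u x ≤ v x) (hhi : ∀ x, v x ≤ b * u x) :
    jeffreyDiv (normalizeSum u) (normalizeSum v) ≤ log (b / a) := by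
  have hSu := sum_pos_of_forall_pos hu
  have hSv := sum_pos_of_forall_pos hv
  obtain ⟨x₀⟩ := ‹Nonempty X›
  have hb : 0 < b := pos_of_mul_pos_left ((hv x₀).trans_le (hhi x₀)) (hu x₀).le
  have hGH := sum_normalizeSum_mul_log_div_le hu hv fun x => (le_inv_mul_iff₀ ha).2 (hlo x)
  have hHG := sum_normalizeSum_mul_log_div_le hv hu hhi
  calc jeffreyDiv (normalizeSum u) (normalizeSum v)
      ≤ log (a⁻¹ * ((∑ y, v y) / ∑ y, u y)) + log (b * ((∑ y, u y) / ∑ y, v y)) :=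
        add_le_add hGH hHG
    _ = log (b / a) := by
        rw [← log_mul (by positivity) (by positivity)]
        congr 1
        field_simp

end JeffreyDivergence

theorem weighted_influence_of_local_failures_general
    {T X : Type} [Fintype T] [Fintype X] [Nonempty X] [DecidableEq X]
    (term : T → X)
    (N : ℕ) (ω : Fin N → ℝ) (hω : ∀ n, 0 < ω n)
    (pFn pBn : Fin N → T → ℝ) (Rn : Fin N → X → ℝ)
    (hpFn_pos : ∀ n τ, 0 < pFn n τ)
    (hpBn_pos : ∀ n τ, 0 < pBn n τ)
    (hRn_pos : ∀ n x, 0 < Rn n x)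
    (pB : T → ℝ) (hpB_pos : ∀ τ, 0 < pB τ)
    (hpB_sum : ∀ x, ∑ τ ∈ univ.filter (fun τ => term τ = x), pB τ = 1)
    (α β : Fin N → ℝ) (hα : ∀ n, α n ∈ Set.Ioo (0 : ℝ) 1) (hβ : ∀ n, 0 < β n)
    (piL : Fin N → X → ℝ) (hpiL : ∀ n x, piL n x = Rn n x / ∑ y, Rn n y)
    (hlower : ∀ n τ, (1 - α n) * (pBn n τ * piL n (term τ)) ≤ pFn n τ)
    (hupper : ∀ n τ, pFn n τ ≤ (1 + β n) * (pBn n τ * piL n (term τ)))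
    (u : X → ℝ) (hu : ∀ x, u x = ∏ n, piL n x ^ (ω n))
    (piG : X → ℝ) (hpiG : ∀ x, piG x = u x / ∑ y, u y)
    (v : X → ℝ)
    (hv : ∀ x, v x = ∑ τ ∈ univ.filter (fun τ => term τ = x),
      pB τ * ∏ n, (pFn n τ / pBn n τ) ^ (ω n))
    (piH : X → ℝ) (hpiH : ∀ x, piH x = v x / ∑ y, v y) :
    (∑ x, piG x * Real.log (piG x / piH x)) +
      (∑ x, piH x * Real.log (piH x / piG x)) ≤
        ∑ n, ω n * Real.log ((1 + β n) / (1 - α n)) := by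
  obtain rfl : piL = fun n => normalizeSum (Rn n) := funext₂ hpiL
  obtain rfl : piG = normalizeSum u := funext hpiG
  obtain rfl : piH = normalizeSum v := funext hpiH
  have hπ (n : Fin N) (x : X) : 0 < normalizeSum (Rn n) x := normalizeSum_pos (hRn_pos n) x
  have hα₀ (n : Fin N) : 0 < 1 - α n := sub_pos.2 (hα n).2
  have hβ₀ (n : Fin N) : 0 < 1 + β n := by linarith [hβ n]
  set a := ∏ n, (1 - α n) ^ ω n
  set b := ∏ n, (1 + β n) ^ ω n
  have ha : 0 < a := prod_pos fun n _ => rpow_pos_of_pos (hα₀ n) _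
  have hu_pos (x : X) : 0 < u x := hu x ▸ prod_pos fun n _ => rpow_pos_of_pos (hπ n x) _
  have hlo (τ : T) : a * u (term τ) ≤ ∏ n, (pFn n τ / pBn n τ) ^ ω n :=
    hu (term τ) ▸ mul_prod_rpow_le_prod_rpow _ (fun n _ => (hα₀ n).le) (fun n _ => (hπ n _).le)
      (fun n _ => (hω n).le)
      fun n _ => (le_div_iff₀ (hpBn_pos n τ)).2 (by linarith [hlower n τ])
  have hhi (τ : T) : ∏ n, (pFn n τ / pBn n τ) ^ ω n ≤ b * u (term τ) :=
    hu (term τ) ▸ prod_rpow_le_mul_prod_rpow _ (fun n _ => (hβ₀ n).le) (fun n _ => (hπ n _).le)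
      (fun n _ => (div_pos (hpFn_pos n τ) (hpBn_pos n τ)).le) (fun n _ => (hω n).le)
      fun n _ => (div_le_iff₀ (hpBn_pos n τ)).2 (by linarith [hupper n τ])
  have hv_lo (x : X) : a * u x ≤ v x :=
    hv x ▸ le_sum_mul_of_forall_le (fun τ _ => (hpB_pos τ).le) (hpB_sum x)
      fun τ hτ => (mem_filter.1 hτ).2 ▸ hlo τ
  have hv_hi (x : X) : v x ≤ b * u x :=
    hv x ▸ sum_mul_le_of_forall_le (fun τ _ => (hpB_pos τ).le) (hpB_sum x)
      fun τ hτ => (mem_filter.1 hτ).2 ▸ hhi τ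
  calc jeffreyDiv (normalizeSum u) (normalizeSum v) ≤ log (b / a) :=
        jeffreyDiv_normalizeSum_le hu_pos (fun x => (mul_pos ha (hu_pos x)).trans_le (hv_lo x))
          ha hv_lo hv_hi
    _ = ∑ n, ω n * log ((1 + β n) / (1 - α n)) :=
        log_prod_rpow_div_prod_rpow _ (fun n _ => hα₀ n) fun n _ => hβ₀ n

/-- Weighted influence of local failures (Theorem 2'). -/
theorem weighted_influence_of_local_failures
    {T X : Type} [Fintype T] [Fintype X] [Nonempty T] [Nonempty X] [DecidableEq X]
    (term : T → X) (hsurj : Function.Surjective term)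
    (N : ℕ) (ω : Fin N → ℝ) (hω : ∀ n, 0 < ω n)
    (pFn pBn : Fin N → T → ℝ) (Rn : Fin N → X → ℝ)
    (hpFn_pos : ∀ n τ, 0 < pFn n τ) (hpFn_sum : ∀ n, ∑ τ, pFn n τ = 1)
    (hpBn_pos : ∀ n τ, 0 < pBn n τ)
    (hpBn_sum : ∀ n x, ∑ τ ∈ univ.filter (fun τ => term τ = x), pBn n τ = 1)
    (hRn_pos : ∀ n x, 0 < Rn n x)
    (pB : T → ℝ) (hpB_pos : ∀ τ, 0 < pB τ)
    (hpB_sum : ∀ x, ∑ τ ∈ univ.filter (fun τ => term τ = x), pB τ = 1)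
    (α β : Fin N → ℝ) (hα : ∀ n, α n ∈ Set.Ioo (0 : ℝ) 1) (hβ : ∀ n, 0 < β n)
    (piL : Fin N → X → ℝ) (hpiL : ∀ n x, piL n x = Rn n x / ∑ y, Rn n y)
    (hlower : ∀ n τ, (1 - α n) * (pBn n τ * piL n (term τ)) ≤ pFn n τ)
    (hupper : ∀ n τ, pFn n τ ≤ (1 + β n) * (pBn n τ * piL n (term τ)))
    (u : X → ℝ) (hu : ∀ x, u x = ∏ n, piL n x ^ (ω n))
    (piG : X → ℝ) (hpiG : ∀ x, piG x = u x / ∑ y, u y)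
    (v : X → ℝ)
    (hv : ∀ x, v x = ∑ τ ∈ univ.filter (fun τ => term τ = x),
      pB τ * ∏ n, (pFn n τ / pBn n τ) ^ (ω n))
    (piH : X → ℝ) (hpiH : ∀ x, piH x = v x / ∑ y, v y) :
    (∑ x, piG x * Real.log (piG x / piH x)) +
      (∑ x, piH x * Real.log (piH x / piG x)) ≤
        ∑ n, ω n * Real.log ((1 + β n) / (1 - α n)) :=
  weighted_influence_of_local_failures_general term N ω hω pFn pBn Rn hpFn_pos hpBn_pos hRn_pos pB
    hpB_pos hpB_sum α β hα hβ piL hpiL hlower hupper u hu piG hpiG v hv piH hpiH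
end
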